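/- Let n ≥ 2, s ≥ 2, and let R(P_n) = u_1,…,u_r be the rooted list of minimal generators of J(P_n). If u_{i_1}⋯u_{i_s} ∈ G(J(P_n)^s), then u_p u_q ∈ G(J(P_n)^2) for all p, q ∈ {i_1,…,i_s}. -/

import Mathlib

open MvPolynomial

noncomputable section

/-- The cover ideal of the path graph `P_n` on vertices `x_1, …, x_n`:
the intersection of the ideals `(x_i, x_{i+1})` over the edges of the path. -/
def pathCoverIdeal (k : Type*) [Field k] (n : ℕ) : Ideal (MvPolynomial ℕ k) :=
  ⨅ i ∈ Finset.Icc 1 (n - 1), Ideal.span {(X i : MvPolynomial ℕ k), X (i + 1)}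

/-- A monomial with coefficient `1`. -/
def IsMonomial {k : Type*} [Field k] (m : MvPolynomial ℕ k) : Prop :=
  ∃ a : ℕ →₀ ℕ, m = monomial a 1

/-- The minimal monomial generating set `G(I)` of a monomial ideal `I`:
monomials of `I` that are not strictly divisible by another monomial of `I`. -/
def minGens {k : Type*} [Field k] (I : Ideal (MvPolynomial ℕ k)) :
    Set (MvPolynomial ℕ k) :=
  {m | IsMonomial m ∧ m ∈ I ∧ ∀ m', IsMonomial m' → m' ∈ I → m' ∣ m → m' = m}

/-- The rooted list `R(P_n)` of the path `P_n`. -/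
def rootedList (k : Type*) [Field k] : ℕ → List (MvPolynomial ℕ k)
  | 0 => [1]
  | 1 => [1]
  | 2 => [X 1, X 2]
  | 3 => [X 2, X 1 * X 3]
  | (n + 4) =>
      ((rootedList k (n + 2)).map fun u => X (n + 3) * u) ++
      ((rootedList k (n + 1)).map fun u => X (n + 4) * X (n + 2) * u)

/-- `F(I^s)`: the set of `s`-fold products of minimal generators of `I`. -/
def sFold {k : Type*} [Field k] (I : Ideal (MvPolynomial ℕ k)) (s : ℕ) :
    Set (MvPolynomial ℕ k) :=
  {m | ∃ L : List (MvPolynomial ℕ k), L.length = s ∧ (∀ u ∈ L, u ∈ minGens I) ∧ m = L.prod}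

/-- `a >_lex b`: the first entry where `a` and `b` differ is bigger in `a`. -/
def lexGt (a b : ℕ → ℕ) : Prop :=
  ∃ t, (∀ j, j < t → a j = b j) ∧ b t < a t

/-- `a` is an exponent-vector expression of `M` as an `s`-fold product of the terms of
the list `L`. -/
def IsExprOn {k : Type*} [Field k] (L : List (MvPolynomial ℕ k)) (s : ℕ) (a : ℕ → ℕ)
    (M : MvPolynomial ℕ k) : Prop :=
  (∀ i, L.length ≤ i → a i = 0) ∧ (∑ i ∈ Finset.range L.length, a i) = s ∧
    M = ∏ i ∈ Finset.range L.length, (L.getD i 1) ^ (a i)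

/-- `a` is the (lexicographically) maximal expression of `M` as an `s`-fold product of
the terms of the list `L`. -/
def IsMaxExpr {k : Type*} [Field k] (L : List (MvPolynomial ℕ k)) (s : ℕ) (a : ℕ → ℕ)
    (M : MvPolynomial ℕ k) : Prop :=
  IsExprOn L s a M ∧ ∀ b, IsExprOn L s b M → b ≠ a → lexGt a b

/-- The rooted order `M >_R N` on `s`-fold products, relative to the list `L` of
minimal generators: maximal expressions are compared lexicographically. -/
def rootedGt {k : Type*} [Field k] (L : List (MvPolynomial ℕ k)) (s : ℕ)
    (M N : MvPolynomial ℕ k) : Prop :=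
  ∃ a b, IsMaxExpr L s a M ∧ IsMaxExpr L s b N ∧ lexGt a b

/-- An ideal is generated by a subset of the variables. -/
def genByVars {k : Type*} [Field k] (I : Ideal (MvPolynomial ℕ k)) : Prop :=
  ∃ T : Set ℕ, I = Ideal.span ((fun i => (X i : MvPolynomial ℕ k)) '' T)

end

/-! If a product `u₁ ⋯ u_s` of elements of `I` lies in `G(I ^ s)`, every subproduct over `T` lies
in `G(I ^ #T)`: a strict divisor of the subproduct, multiplied by the complementary factors, would
be a strict divisor of the whole product. For `p ≠ q` this is the claim. For `p = q` it gives
`u_p ∈ G(J)`, and squarefreeness finishes: `J(P_n)` is generated by squarefree monomials, and if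
`w₁ w₂ ∣ u_p ^ 2` with `w₁`, `w₂`, `u_p` squarefree, then `w₁ ∣ u_p` and `w₂ ∣ u_p`, so both equal
`u_p` by minimality. -/

lemma isMonomial_X {k : Type*} [Field k] (i : ℕ) : IsMonomial (X i : MvPolynomial ℕ k) :=
  ⟨Finsupp.single i 1, rfl⟩

namespace IsMonomial

variable {k : Type*} [Field k]

lemma one : IsMonomial (1 : MvPolynomial ℕ k) := ⟨0, by rw [monomial_zero', C_1]⟩

lemma mul {u v : MvPolynomial ℕ k} (hu : IsMonomial u) (hv : IsMonomial v) :
    IsMonomial (u * v) := by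
  obtain ⟨a, rfl⟩ := hu
  obtain ⟨b, rfl⟩ := hv
  exact ⟨a + b, by rw [monomial_mul, one_mul]⟩

lemma prod {ι : Type*} {T : Finset ι} {u : ι → MvPolynomial ℕ k}
    (hu : ∀ t ∈ T, IsMonomial (u t)) : IsMonomial (∏ t ∈ T, u t) := by
  classical
  induction T using Finset.induction_on with
  | empty => simpa using one
  | insert a T ha ih =>
    rw [Finset.prod_insert ha]
    exact (hu a (by simp)).mul (ih fun t ht => hu t (by simp [ht]))

lemma ne_zero {u : MvPolynomial ℕ k} (hu : IsMonomial u) : u ≠ 0 := by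
  obtain ⟨a, rfl⟩ := hu
  simp

end IsMonomial

section MinGens

open scoped Pointwise

variable {k : Type*} [Field k]

theorem prod_mem_minGens_pow_of_subset {ι : Type*} {I : Ideal (MvPolynomial ℕ k)}
    {u : ι → MvPolynomial ℕ k} {S T : Finset ι} (hu : ∀ t ∈ S, IsMonomial (u t))
    (huI : ∀ t ∈ S, u t ∈ I) (h : ∏ t ∈ S, u t ∈ minGens (I ^ S.card)) (hTS : T ⊆ S) :
    ∏ t ∈ T, u t ∈ minGens (I ^ T.card) := by
  classical
  have prod_mem_pow : ∀ R ⊆ S, ∏ t ∈ R, u t ∈ I ^ R.card := fun R hR => by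
    simpa using Ideal.prod_mem_prod (I := fun _ => I) fun t ht => huI t (hR ht)
  have hsplit : ∏ t ∈ S, u t = (∏ t ∈ T, u t) * ∏ t ∈ S \ T, u t := by
    rw [mul_comm, Finset.prod_sdiff hTS]
  have hcard : S.card = T.card + (S \ T).card := by
    rw [add_comm, Finset.card_sdiff_add_card_eq_card hTS]
  have hrest : IsMonomial (∏ t ∈ S \ T, u t) :=
    IsMonomial.prod fun t ht => hu t (Finset.sdiff_subset ht)
  refine ⟨IsMonomial.prod fun t ht => hu t (hTS ht), prod_mem_pow T hTS, ?_⟩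
  intro v hv hvI hvdvd
  have hvS : v * ∏ t ∈ S \ T, u t = ∏ t ∈ S, u t := by
    refine h.2.2 _ (hv.mul hrest) ?_ ?_
    · rw [hcard, pow_add]
      exact Ideal.mul_mem_mul hvI (prod_mem_pow _ Finset.sdiff_subset)
    · rw [hsplit]
      exact mul_dvd_mul_right hvdvd _
  exact mul_right_cancel₀ hrest.ne_zero (hvS.trans hsplit)

lemma exponent_eq_of_mem_minGens {I : Ideal (MvPolynomial ℕ k)} {c e : ℕ →₀ ℕ}
    (hc : monomial c (1 : k) ∈ minGens I) (he : monomial e (1 : k) ∈ I) (hle : e ≤ c) :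
    e = c :=
  monomial_left_injective one_ne_zero <|
    hc.2.2 _ ⟨e, rfl⟩ he (monomial_dvd_monomial.mpr ⟨Or.inr hle, dvd_rfl⟩)

lemma exists_add_le_of_monomial_mem_span_sq {E : Set (ℕ →₀ ℕ)} {c : ℕ →₀ ℕ}
    (hc : monomial c (1 : k) ∈ Ideal.span ((fun e => monomial e (1 : k)) '' E) ^ 2) :
    ∃ e₁ ∈ E, ∃ e₂ ∈ E, e₁ + e₂ ≤ c := by
  have hsub : (fun e => monomial e (1 : k)) '' E * (fun e => monomial e (1 : k)) '' E ⊆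
      (fun e => monomial e (1 : k)) '' (E + E) := by
    rintro _ ⟨_, ⟨e₁, he₁, rfl⟩, _, ⟨e₂, he₂, rfl⟩, rfl⟩
    exact ⟨e₁ + e₂, Set.add_mem_add he₁ he₂, by simp only [monomial_mul, one_mul]⟩
  rw [sq, Ideal.span_mul_span'] at hc
  obtain ⟨_, ⟨e₁, he₁, e₂, he₂, rfl⟩, hle⟩ :=
    mem_ideal_span_monomial_image.mp (Ideal.span_mono hsub hc) c (by simp)
  exact ⟨e₁, he₁, e₂, he₂, hle⟩

variable {E : Set (ℕ →₀ ℕ)}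

lemma exponent_le_one_of_mem_minGens (hE : ∀ e ∈ E, ∀ x, e x ≤ 1) {c : ℕ →₀ ℕ}
    (hc : monomial c (1 : k) ∈ minGens (Ideal.span ((fun e => monomial e (1 : k)) '' E))) :
    ∀ x, c x ≤ 1 := by
  obtain ⟨e, he, hle⟩ := mem_ideal_span_monomial_image.mp hc.2.1 c (by simp)
  rw [← exponent_eq_of_mem_minGens hc (Ideal.subset_span ⟨e, he, rfl⟩) hle]
  exact hE e he

theorem sq_mem_minGens_sq (hE : ∀ e ∈ E, ∀ x, e x ≤ 1) {u : MvPolynomial ℕ k}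
    (hu : u ∈ minGens (Ideal.span ((fun e => monomial e (1 : k)) '' E))) :
    u ^ 2 ∈ minGens (Ideal.span ((fun e => monomial e (1 : k)) '' E) ^ 2) := by
  obtain ⟨c, rfl⟩ := hu.1
  have hc := exponent_le_one_of_mem_minGens hE hu
  have factor_eq : ∀ e ∈ E, ∀ e' ∈ E, e + e' ≤ 2 • c → e = c := fun e he e' he' hle =>
    exponent_eq_of_mem_minGens hu (Ideal.subset_span ⟨e, he, rfl⟩) fun x => by
      have := hle x
      have := hc x
      have := hE e he x
      simp only [Finsupp.coe_add, Pi.add_apply, Finsupp.coe_smul, Pi.smul_apply,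
        smul_eq_mul] at *
      omega
  have hmem := Ideal.pow_mem_pow hu.2.1 2
  rw [monomial_pow, one_pow] at hmem ⊢
  refine ⟨⟨_, rfl⟩, hmem, ?_⟩
  rintro _ ⟨d, rfl⟩ hdI hdvd
  have hd : d ≤ 2 • c := (monomial_dvd_monomial.mp hdvd).1.resolve_left one_ne_zero
  obtain ⟨e₁, he₁, e₂, he₂, hle⟩ := exists_add_le_of_monomial_mem_span_sq hdI
  have h₁ := factor_eq e₁ he₁ e₂ he₂ (hle.trans hd)
  have h₂ := factor_eq e₂ he₂ e₁ he₁ (add_comm e₁ e₂ ▸ hle.trans hd)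
  rw [le_antisymm hd (by simpa only [two_nsmul, h₁, h₂] using hle)]

end MinGens

section PathCover

variable {k : Type*} [Field k]

def IsPathCover (n : ℕ) (d : ℕ →₀ ℕ) : Prop :=
  ∀ j ∈ Finset.Icc 1 (n - 1), d j ≠ 0 ∨ d (j + 1) ≠ 0

lemma IsPathCover.mono {n : ℕ} {d d' : ℕ →₀ ℕ} (hd : IsPathCover n d) (hle : d ≤ d') :
    IsPathCover n d' := fun j hj => by
  have := hle j
  have := hle (j + 1)
  have := hd j hj
  omega

lemma mem_pathCoverIdeal_iff {n : ℕ} {f : MvPolynomial ℕ k} :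
    f ∈ pathCoverIdeal k n ↔ ∀ d ∈ f.support, IsPathCover n d := by
  have edge : ∀ j : ℕ, ({(X j : MvPolynomial ℕ k), X (j + 1)} : Set (MvPolynomial ℕ k)) =
      (fun e => monomial e (1 : k)) '' {Finsupp.single j 1, Finsupp.single (j + 1) 1} := by
    intro j
    rw [Set.image_insert_eq, Set.image_singleton]
    rfl
  simp only [pathCoverIdeal, Submodule.mem_iInf, edge, mem_ideal_span_monomial_image,
    Set.mem_insert_iff, Set.mem_singleton_iff, exists_eq_or_imp, exists_eq_left,
    Finsupp.single_le_iff, Nat.one_le_iff_ne_zero, IsPathCover]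
  exact ⟨fun H d hd j hj => H j hj d hd, fun H j hj d hd => H d hd j hj⟩

theorem pathCoverIdeal_eq_span_squarefree (n : ℕ) :
    pathCoverIdeal k n = Ideal.span ((fun e => monomial e (1 : k)) ''
      {e | (∀ x, e x ≤ 1) ∧ IsPathCover n e}) := by
  ext f
  rw [mem_pathCoverIdeal_iff, mem_ideal_span_monomial_image]
  refine forall₂_congr fun d _ => ⟨fun hd => ?_, fun ⟨e, ⟨_, he⟩, hle⟩ => he.mono hle⟩
  refine ⟨Finsupp.mapRange (fun a => min a 1) (by simp) d, ⟨fun x => ?_, fun j hj => ?_⟩,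
    fun x => ?_⟩ <;> simp only [Finsupp.mapRange_apply]
  · exact min_le_right _ _
  · have := hd j hj
    omega
  · exact min_le_left _ _

lemma mul_mem_pathCoverIdeal {m n : ℕ} {f g : MvPolynomial ℕ k} (hf : f ∈ pathCoverIdeal k m)
    (hg : ∀ i, m ≤ i → i + 1 ≤ n → g ∈ Ideal.span {X i, X (i + 1)}) :
    g * f ∈ pathCoverIdeal k n := by
  simp only [pathCoverIdeal, Submodule.mem_iInf, Finset.mem_Icc] at hf ⊢
  intro i hi
  by_cases him : i + 1 ≤ m
  · exact Ideal.mul_mem_left _ _ (hf i ⟨hi.1, by omega⟩)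
  · exact Ideal.mul_mem_right _ _ (hg i (by omega) (by omega))

lemma X_mem_span_edge {i j : ℕ} (h : j = i ∨ j = i + 1) :
    (X j : MvPolynomial ℕ k) ∈ Ideal.span {X i, X (i + 1)} :=
  Ideal.subset_span (by rcases h with rfl | rfl <;> simp)

theorem isMonomial_and_mem_of_mem_rootedList :
    ∀ n, ∀ u ∈ rootedList k n, IsMonomial u ∧ u ∈ pathCoverIdeal k n
  | 0 | 1 => by simp [rootedList, pathCoverIdeal, IsMonomial.one]
  | 2 => by
    simp only [rootedList, List.mem_cons, List.not_mem_nil, or_false, forall_eq_or_imp,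
      forall_eq]
    refine ⟨⟨isMonomial_X 1, ?_⟩, isMonomial_X 2, ?_⟩ <;>
      simpa [pathCoverIdeal] using X_mem_span_edge (by simp)
  | 3 => by
    simp only [rootedList, List.mem_cons, List.not_mem_nil, or_false, forall_eq_or_imp,
      forall_eq]
    refine ⟨⟨isMonomial_X 2, ?_⟩, (isMonomial_X 1).mul (isMonomial_X 3), ?_⟩ <;>
      simp only [pathCoverIdeal, Submodule.mem_iInf, Finset.mem_Icc] <;>
      intro i hi <;> obtain rfl | rfl : i = 1 ∨ i = 2 := by omega
    · exact X_mem_span_edge (by simp)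
    · exact X_mem_span_edge (by simp)
    · exact Ideal.mul_mem_right _ _ (X_mem_span_edge (by simp))
    · exact Ideal.mul_mem_left _ _ (X_mem_span_edge (by simp))
  | n + 4 => by
    simp only [rootedList, List.mem_append, List.mem_map]
    rintro _ (⟨u, hu, rfl⟩ | ⟨u, hu, rfl⟩)
    · obtain ⟨hmon, hmem⟩ := isMonomial_and_mem_of_mem_rootedList (n + 2) u hu
      refine ⟨(isMonomial_X _).mul hmon, mul_mem_pathCoverIdeal hmem fun i hi hin => ?_⟩
      exact X_mem_span_edge (by omega)
    · obtain ⟨hmon, hmem⟩ := isMonomial_and_mem_of_mem_rootedList (n + 1) u hu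
      refine ⟨((isMonomial_X _).mul (isMonomial_X _)).mul hmon,
        mul_mem_pathCoverIdeal hmem fun i hi hin => ?_⟩
      by_cases hi3 : i = n + 3
      · exact Ideal.mul_mem_right _ _ (X_mem_span_edge (by omega))
      · exact Ideal.mul_mem_left _ _ (X_mem_span_edge (by omega))

end PathCover

theorem pairs_of_minimal_sFold_are_minimal_general (k : Type*) [Field k]
    (n s : ℕ)
    (i : Fin s → ℕ) (hi : ∀ t, i t < (rootedList k n).length)
    (h : (∏ t, (rootedList k n).getD (i t) 1) ∈ minGens ((pathCoverIdeal k n) ^ s)) :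
    ∀ p q : Fin s,
      (rootedList k n).getD (i p) 1 * (rootedList k n).getD (i q) 1 ∈
        minGens ((pathCoverIdeal k n) ^ 2) := by
  intro p q
  set u : Fin s → MvPolynomial ℕ k := fun t => (rootedList k n).getD (i t) 1
  show u p * u q ∈ _
  have hu (t : Fin s) : IsMonomial (u t) ∧ u t ∈ pathCoverIdeal k n :=
    isMonomial_and_mem_of_mem_rootedList n _ <| by
      rw [show u t = _ from List.getD_eq_getElem _ _ (hi t)]
      exact List.getElem_mem _
  have hsub (T : Finset (Fin s)) : ∏ t ∈ T, u t ∈ minGens (pathCoverIdeal k n ^ T.card) :=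
    prod_mem_minGens_pow_of_subset (fun t _ => (hu t).1) (fun t _ => (hu t).2)
      (by rwa [Finset.card_univ, Fintype.card_fin]) (Finset.subset_univ T)
  obtain rfl | hpq := eq_or_ne p q
  · have hp : u p ∈ minGens (pathCoverIdeal k n) := by simpa using hsub {p}
    rw [pathCoverIdeal_eq_span_squarefree] at hp
    rw [← sq, pathCoverIdeal_eq_span_squarefree]
    exact sq_mem_minGens_sq (fun e he => he.1) hp
  · simpa [Finset.prod_pair hpq, Finset.card_pair hpq] using hsub {p, q}

/-- Let `n ≥ 2`, `s ≥ 2`, and let `R(P_n) = u_1, …, u_r`.  If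
`u_{i_1} ⋯ u_{i_s} ∈ G(J(P_n)^s)`, then `u_p u_q ∈ G(J(P_n)^2)` for all
`p, q ∈ {i_1, …, i_s}`. -/
theorem pairs_of_minimal_sFold_are_minimal (k : Type*) [Field k]
    (n s : ℕ) (hn : 2 ≤ n) (hs : 2 ≤ s)
    (i : Fin s → ℕ) (hi : ∀ t, i t < (rootedList k n).length)
    (h : (∏ t, (rootedList k n).getD (i t) 1) ∈ minGens ((pathCoverIdeal k n) ^ s)) :
    ∀ p q : Fin s,
      (rootedList k n).getD (i p) 1 * (rootedList k n).getD (i q) 1 ∈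
        minGens ((pathCoverIdeal k n) ^ 2) :=
  pairs_of_minimal_sFold_are_minimal_general k n s i hi h
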